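/- arXiv:1102.3441 — 4 statements merged into one kernel-verified Lean document; each statement's English description precedes it below -/
import Mathlib

section
/- Let a, ξ ∈ [0,1]. Then 1 + (2a - 1)*ξ + 2*sqrt(a*(1-a)*ξ*(1-ξ)) ≤ 1 + sqrt(ξ). -/
/-!
Put `c = 2a - 1` and `d = 2√(a(1-a))`, so that `c² + d² = 1`. Then
`(2a-1)ξ + 2√(a(1-a)ξ(1-ξ)) = √ξ · (c√ξ + d√(1-ξ))`, and the bracket is the inner product of
two unit vectors of `ℝ²`, hence at most `1`.
-/

open Real

theorem mul_add_mul_le_one_of_sq_add_sq_le_one {x y u v : ℝ} (hxy : x ^ 2 + y ^ 2 ≤ 1)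
    (huv : u ^ 2 + v ^ 2 ≤ 1) : x * u + y * v ≤ 1 := by
  nlinarith [sq_nonneg (x - u), sq_nonneg (y - v)]

theorem mul_add_mul_sqrt_le_sqrt {c d ξ : ℝ} (hcd : c ^ 2 + d ^ 2 ≤ 1) (hξ0 : 0 ≤ ξ)
    (hξ1 : ξ ≤ 1) : c * ξ + d * √(ξ * (1 - ξ)) ≤ √ξ := by
  have hunit : √ξ ^ 2 + √(1 - ξ) ^ 2 ≤ 1 := by
    rw [sq_sqrt hξ0, sq_sqrt (sub_nonneg.2 hξ1)]; linarith
  calc c * ξ + d * √(ξ * (1 - ξ)) = √ξ * (c * √ξ + d * √(1 - ξ)) := by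
        rw [sqrt_mul hξ0]
        nth_rewrite 1 [← mul_self_sqrt hξ0]
        ring
    _ ≤ √ξ * 1 :=
        mul_le_mul_of_nonneg_left (mul_add_mul_le_one_of_sq_add_sq_le_one hcd hunit) (sqrt_nonneg _)
    _ = √ξ := mul_one _

theorem stmt_1 (a ξ : ℝ) (ha0 : 0 ≤ a) (ha1 : a ≤ 1) (hξ0 : 0 ≤ ξ) (hξ1 : ξ ≤ 1) :
    1 + (2 * a - 1) * ξ + 2 * Real.sqrt (a * (1 - a) * ξ * (1 - ξ)) ≤ 1 + Real.sqrt ξ := by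
  have ha : 0 ≤ a * (1 - a) := mul_nonneg ha0 (sub_nonneg.2 ha1)
  have hsplit : 2 * √(a * (1 - a) * ξ * (1 - ξ)) = 2 * √(a * (1 - a)) * √(ξ * (1 - ξ)) := by
    rw [mul_assoc (a * (1 - a)), sqrt_mul ha]; ring
  have hcd : (2 * a - 1) ^ 2 + (2 * √(a * (1 - a))) ^ 2 ≤ 1 := by
    rw [mul_pow, sq_sqrt ha]; nlinarith
  linarith [mul_add_mul_sqrt_le_sqrt hcd hξ0 hξ1]
end

section
/- For any real numbers b_0, b_1 ∈ [0,1] with b_1 > 1 - b_0, we have (sqrt(b_1) - sqrt(1 - b_0))^2 ≥ 0, and if b_0 + b_1 ≥ 1 + ε with 0 ≤ ε ≤ 1 then (sqrt(b_1) - sqrt(1-b_0))^2 ≥ ε^2/4. -/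
theorem stmt_2 (b₀ b₁ ε : ℝ) (hb₀0 : 0 ≤ b₀) (hb₀1 : b₀ ≤ 1)
    (hb₁0 : 0 ≤ b₁) (hb₁1 : b₁ ≤ 1) (hgt : b₁ > 1 - b₀)
    (hε0 : 0 ≤ ε) (hε1 : ε ≤ 1) (hsum : b₀ + b₁ ≥ 1 + ε) :
    (Real.sqrt b₁ - Real.sqrt (1 - b₀)) ^ 2 ≥ 0 ∧
    (Real.sqrt b₁ - Real.sqrt (1 - b₀)) ^ 2 ≥ ε ^ 2 / 4 := by
  set a := Real.sqrt b₁ with ha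
  set c := Real.sqrt (1 - b₀) with hc
  have ha2 : a ^ 2 = b₁ := Real.sq_sqrt hb₁0
  have hc2 : c ^ 2 = 1 - b₀ := Real.sq_sqrt (by linarith)
  have ha0 : 0 ≤ a := Real.sqrt_nonneg _
  have hc0 : 0 ≤ c := Real.sqrt_nonneg _
  have ha1 : a ≤ 1 := by
    rw [ha, show (1:ℝ) = Real.sqrt 1 by simp]
    exact Real.sqrt_le_sqrt hb₁1
  have hc1 : c ≤ 1 := Real.sqrt_le_one.mpr (by linarith)
  have hac : c ≤ a := Real.sqrt_le_sqrt (by linarith)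
  constructor
  · positivity
  · have hkey : (a - c) * (a + c) ≥ ε := by nlinarith
    have h2 : a - c ≥ ε / 2 := by nlinarith
    nlinarith
end

section
/- Leftover Hash Lemma: Let V be a random variable over {0,1}^ℓ with min-entropy at least λ, and let H be a pairwise independent family of hash functions from {0,1}^ℓ to {0,1}^v with v = λ − 2·log(1/ε). Then the statistical distance between (H, H(V)) and (H, U_v) is at most ε, where H is uniform over the family independent of V, and U_v is uniform over {0,1}^v. -/
/-!
Pairwise independence makes two distinct inputs collide under a random hash with probability
`1 / 2^v`, so the collision probability of `(H, H(V))` is at most `(2^(-λ) + 2^(-v)) / |H|`,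
the diagonal contributing at most `max_x Pr[V = x] ≤ 2^(-λ)`. Subtracting the collision
probability `1 / (|H| 2^v)` of the uniform distribution leaves the squared L² distance
`2^(-λ) / |H|`, and Cauchy–Schwarz over the `|H| 2^v` outcomes turns it into the L¹ bound
`2^((v - λ) / 2) = ε`.
-/

open Finset

lemma card_collision_eq_of_pairwise {α β H : Type*} [Fintype β] [Fintype H] [DecidableEq β]
    (f : H → α → β) (x x' : α)
    (hpair : ∀ y, (#{h | f h x = y ∧ f h x' = y} : ℝ) / Fintype.card H
      = ((Fintype.card β : ℝ) ^ 2)⁻¹) :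
    (#{h | f h x = f h x'} : ℝ) = Fintype.card H / Fintype.card β := by
  rcases isEmpty_or_nonempty H with _ | _
  · simp
  have hsplit : #{h | f h x = f h x'} = ∑ y, #{h | f h x = y ∧ f h x' = y} := by
    rw [card_eq_sum_card_fiberwise (f := fun h => f h x) (t := univ) fun _ _ => mem_univ _]
    refine sum_congr rfl fun y _ => congrArg card ?_
    ext h
    simp only [mem_filter, mem_univ, true_and]
    constructor
    · rintro ⟨hc, rfl⟩; exact ⟨rfl, hc.symm⟩
    · rintro ⟨rfl, h'⟩; exact ⟨h'.symm, rfl⟩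
  have hfib : ∀ y, (#{h | f h x = y ∧ f h x' = y} : ℝ)
      = Fintype.card H * ((Fintype.card β : ℝ) ^ 2)⁻¹ := fun y => by
    rw [← hpair y, mul_div_cancel₀ _ (by positivity)]
  rw [hsplit, Nat.cast_sum, sum_congr rfl fun y _ => hfib y, sum_const, card_univ,
    nsmul_eq_mul]
  rcases isEmpty_or_nonempty β with _ | _
  · simp
  · field_simp

lemma sq_sum_abs_sub_inv_card_le {γ : Type*} [Fintype γ] (P : γ → ℝ) (hP : ∑ z, P z = 1) :
    (∑ z, |P z - (Fintype.card γ : ℝ)⁻¹|) ^ 2 ≤ Fintype.card γ * ∑ z, P z ^ 2 - 1 := by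
  have hN : (Fintype.card γ : ℝ) ≠ 0 := by
    rintro hN
    rw [Nat.cast_eq_zero, Fintype.card_eq_zero_iff] at hN
    simp at hP
  calc (∑ z, |P z - (Fintype.card γ : ℝ)⁻¹|) ^ 2
      ≤ Fintype.card γ * ∑ z, |P z - (Fintype.card γ : ℝ)⁻¹| ^ 2 :=
        sq_sum_le_card_mul_sum_sq
    _ = Fintype.card γ * ∑ z, P z ^ 2 - 1 := by
        simp only [sq_abs, sub_sq, sum_add_distrib, sum_sub_distrib, ← sum_mul, ← mul_sum, hP,
          sum_const, card_univ, nsmul_eq_mul]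
        field_simp
        ring

section
variable {α β H : Type*} [Fintype α] [Fintype β] [Fintype H] [DecidableEq β]

lemma sum_sq_sum_fiber_eq (f : H → α → β) (p : α → ℝ) :
    ∑ h, ∑ y, (∑ x with f h x = y, p x) ^ 2
      = ∑ x, ∑ x', p x * p x' * #{h | f h x = f h x'} := by
  have hfib : ∀ h, ∑ y, (∑ x with f h x = y, p x) ^ 2
      = ∑ x, ∑ x' with f h x = f h x', p x * p x' := fun h => by
    simp_rw [sq, sum_mul_sum]
    rw [← sum_fiberwise univ (f h)]
    refine sum_congr rfl fun y _ => sum_congr rfl fun x hx => ?_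
    simp only [← (mem_filter.mp hx).2, eq_comm]
  simp_rw [hfib, mul_comm _ (#_ : ℝ), ← nsmul_eq_mul, ← sum_const, sum_filter]
  rw [sum_comm]
  exact sum_congr rfl fun x _ => sum_comm

lemma sum_sq_sum_fiber_le (f : H → α → β) (p : α → ℝ) (hp0 : ∀ x, 0 ≤ p x)
    (hp1 : ∑ x, p x = 1) {m : ℝ} (hm : ∀ x, p x ≤ m)
    (huniv : ∀ x x', x ≠ x' → (#{h | f h x = f h x'} : ℝ) ≤ Fintype.card H / Fintype.card β) :
    ∑ h, ∑ y, (∑ x with f h x = y, p x) ^ 2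
      ≤ Fintype.card H * (m + (Fintype.card β : ℝ)⁻¹) := by
  classical
  have hK : ∀ x x', (#{h | f h x = f h x'} : ℝ)
      ≤ (if x = x' then (Fintype.card H : ℝ) else 0) + Fintype.card H / Fintype.card β := by
    intro x x'
    by_cases hx : x = x'
    · subst hx
      simp only [filter_true, card_univ]
      exact le_add_of_nonneg_right (by positivity)
    · simpa [hx] using huniv x x' hx
  have hsq : ∑ x, p x ^ 2 ≤ m := by
    calc ∑ x, p x ^ 2 ≤ ∑ x, m * p x :=
          sum_le_sum fun x _ => by rw [sq]; exact mul_le_mul_of_nonneg_right (hm x) (hp0 x)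
      _ = m := by rw [← mul_sum, hp1, mul_one]
  calc ∑ h, ∑ y, (∑ x with f h x = y, p x) ^ 2
      = ∑ x, ∑ x', p x * p x' * #{h | f h x = f h x'} := sum_sq_sum_fiber_eq f p
    _ ≤ ∑ x, ∑ x', p x * p x' *
          ((if x = x' then (Fintype.card H : ℝ) else 0) + Fintype.card H / Fintype.card β) := by
        gcongr with x _ x' _
        · exact mul_nonneg (hp0 x) (hp0 x')
        · exact hK x x'
    _ = Fintype.card H * ∑ x, p x ^ 2 + Fintype.card H / Fintype.card β * (∑ x, p x) ^ 2 := by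
        simp only [mul_add, sum_add_distrib, mul_ite, mul_zero, sum_ite_eq, mem_univ, if_true]
        rw [mul_sum, sq, sum_mul_sum, mul_sum]
        congr 1 <;> refine sum_congr rfl fun x _ => ?_
        · ring
        · rw [mul_sum]
          exact sum_congr rfl fun x' _ => by ring
    _ ≤ Fintype.card H * (m + (Fintype.card β : ℝ)⁻¹) := by
        rw [hp1, one_pow, mul_one, mul_add, div_eq_mul_inv]
        gcongr

theorem sq_sum_abs_hash_sub_uniform_le [Nonempty H] (f : H → α → β) (p : α → ℝ)
    (hp0 : ∀ x, 0 ≤ p x) (hp1 : ∑ x, p x = 1) {m : ℝ} (hm : ∀ x, p x ≤ m)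
    (huniv : ∀ x x', x ≠ x' → (#{h | f h x = f h x'} : ℝ) ≤ Fintype.card H / Fintype.card β) :
    (∑ h, ∑ y, |(Fintype.card H : ℝ)⁻¹ * (∑ x with f h x = y, p x)
        - (Fintype.card H : ℝ)⁻¹ * (Fintype.card β : ℝ)⁻¹|) ^ 2
      ≤ Fintype.card β * m := by
  set c : ℝ := (Fintype.card H : ℝ)
  set b : ℝ := (Fintype.card β : ℝ)
  have hc : c ≠ 0 := by positivity
  set P : H × β → ℝ := fun z => c⁻¹ * ∑ x with f z.1 x = z.2, p x
  have hP : ∑ z, P z = 1 := by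
    simp only [P, Fintype.sum_prod_type, ← mul_sum, sum_fiberwise, hp1, sum_const, card_univ,
      nsmul_eq_mul, mul_one]
    exact inv_mul_cancel₀ hc
  obtain ⟨x⟩ : Nonempty α := by
    rw [← not_isEmpty_iff]
    intro
    simp at hp1
  have : Nonempty β := ⟨f (Classical.arbitrary H) x⟩
  have hb : b ≠ 0 := by positivity
  have hcard : (Fintype.card (H × β) : ℝ) = c * b := by
    rw [Fintype.card_prod, Nat.cast_mul]
  have hdist := sq_sum_abs_sub_inv_card_le P hP
  rw [hcard, mul_inv, Fintype.sum_prod_type] at hdist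
  refine hdist.trans ?_
  have hsq := sum_sq_sum_fiber_le f p hp0 hp1 hm huniv
  simp only [P, Fintype.sum_prod_type, mul_pow, ← mul_sum]
  calc c * b * ((c⁻¹) ^ 2 * ∑ h, ∑ y, (∑ x with f h x = y, p x) ^ 2) - 1
      ≤ c * b * ((c⁻¹) ^ 2 * (c * (m + b⁻¹))) - 1 := by gcongr
    _ = b * m := by field_simp; ring

end

theorem stmt_11 (ℓ v : ℕ) {H : Type*} [Fintype H] [Nonempty H]
    (eval : H → (Fin ℓ → ZMod 2) → (Fin v → ZMod 2))
    -- `H` (with uniform distribution) is a pairwise independent hash family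
    (hpair : ∀ x x' : Fin ℓ → ZMod 2, x ≠ x' → ∀ y y' : Fin v → ZMod 2,
      ((Finset.univ.filter (fun h : H => eval h x = y ∧ eval h x' = y')).card : ℝ)
        / Fintype.card H = ((2 : ℝ) ^ (2 * v))⁻¹)
    -- `pV` is a distribution on `{0,1}^ℓ` with min-entropy at least `λ`
    (pV : (Fin ℓ → ZMod 2) → ℝ) (hpV0 : ∀ x, 0 ≤ pV x) (hpV1 : ∑ x, pV x = 1)
    (lam : ℝ) (hmin : ∀ x, pV x ≤ (2 : ℝ) ^ (-lam))
    (ε : ℝ) (hε : 0 < ε)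
    -- the output length is `λ - 2 log(1/ε)`
    (hv : (v : ℝ) = lam - 2 * Real.logb 2 (1 / ε)) :
    (1 / 2) * ∑ h : H, ∑ y : Fin v → ZMod 2,
        |(Fintype.card H : ℝ)⁻¹ * (∑ x ∈ Finset.univ.filter (fun x => eval h x = y), pV x)
          - (Fintype.card H : ℝ)⁻¹ * ((2 : ℝ) ^ v)⁻¹| ≤ ε := by
  have hcard : (Fintype.card (Fin v → ZMod 2) : ℝ) = 2 ^ v := by simp
  have huniv : ∀ x x', x ≠ x' →
      (#{h | eval h x = eval h x'} : ℝ) ≤ Fintype.card H / Fintype.card (Fin v → ZMod 2) :=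
    fun x x' hne => (card_collision_eq_of_pairwise eval x x' fun y => by
      rw [hpair x x' hne y y, hcard, ← pow_mul, mul_comm]).le
  have hbound := sq_sum_abs_hash_sub_uniform_le eval pV hpV0 hpV1 hmin huniv
  have hε2 : (2 : ℝ) ^ v * 2 ^ (-lam) = ε ^ 2 := by
    have hexp : (v : ℝ) + -lam = Real.logb 2 ε * 2 := by
      rw [hv, one_div, Real.logb_inv]; ring
    rw [← Real.rpow_natCast, ← Real.rpow_add two_pos, hexp, Real.rpow_mul zero_le_two,
      Real.rpow_logb two_pos (by norm_num) hε, Real.rpow_two]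
  rw [hcard, hε2] at hbound
  have hsum := le_of_pow_le_pow_left₀ two_ne_zero hε.le hbound
  linarith
end

section
/- Let A : {0,1}^k → {0,1}^n be a (randomized) function, H a pairwise independent hash family from {0,1}^n to {0,1}^{k} (so outputs of f are hashed to length t−Δ₁ = k), f : {0,1}^n → {0,1}^n, and W_{h,η} ⊆ {0,1}^n for each (h, η). Suppose (1) Pr[A(H, U_k) ∈ W_{H, U_k}] ≥ δ where H is uniform over the family and U_k uniform over {0,1}^k, (2) every x ∈ W_{h,η} with η = h(f(x)) satisfies Pr[f(U_n) = f(x)] ≥ 2^{-t-Δ₃}, and (3) x ∈ W_{h,η} implies h(f(x)) = η. Then the algorithm B that on input y = f(x) picks h uniformly and outputs A(h, h(y)) satisfies Pr[f(B(f(U_n))) = f(U_n)] ≥ 2^{-(Δ₁+Δ₃)} · δ, where 2^{-Δ₁} accounts for k = t − Δ₁. -/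
/-!
Fix the hash `h` and the coins `r` of `A`. Every target `η` on which `A` succeeds yields a heavy
point `A h η r ∈ W h η`, whose whole `f`-fibre (of size at least `2^n · 2^{-t-Δ₃}`) is inverted by
`B`; these fibres are disjoint for different `η` because `η` is recovered from any of their
points as `h(f x)`. So the number of inverted `x` is at least `2^n · 2^{-t-Δ₃}` times the number
of successful targets, and averaging over `h`, `r` turns the `|K| = 2^{t-Δ₁}` targets into the
factor `2^{-Δ₁}`.
-/

open Finset

theorem mul_card_hits_le_card_inversions {X Y K : Type*} [Fintype X] [DecidableEq Y] [Fintype K]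
    (f : X → Y) (e : Y → K) (a : K → X) (P : K → Prop) [DecidablePred P] (c : ℝ)
    (hhash : ∀ η, P η → e (f (a η)) = η)
    (hheavy : ∀ η, P η → c ≤ #{x | f x = f (a η)}) :
    c * #{η | P η} ≤ #{x | f (a (e (f x))) = f x} := by
  classical
  set G : Finset X := {x | f (a (e (f x))) = f x}
  have hfibre : ∀ η, P η → ({x | f x = f (a η)} : Finset X) ⊆ {x ∈ G | e (f x) = η} := by
    intro η hη x hx
    simp only [mem_filter, mem_univ, true_and, G] at hx ⊢
    rw [hx, hhash η hη]
    exact ⟨rfl, rfl⟩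
  calc c * #{η | P η} = ∑ η with P η, c := by rw [sum_const, nsmul_eq_mul, mul_comm]
    _ ≤ ∑ η with P η, (#{x ∈ G | e (f x) = η} : ℝ) := by
      refine sum_le_sum fun η hη => ?_
      have hη : P η := by simpa using hη
      exact (hheavy η hη).trans (by exact_mod_cast card_le_card (hfibre η hη))
    _ ≤ ∑ η, (#{x ∈ G | e (f x) = η} : ℝ) :=
      sum_le_sum_of_subset_of_nonneg (subset_univ _) fun _ _ _ => by positivity
    _ = #G := by exact_mod_cast (card_eq_sum_card_fiberwise fun x _ => mem_univ (e (f x))).symm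

theorem stmt_16_general (n : ℕ) (t Δ₁ Δ₃ δ : ℝ)
    {H K R : Type*} [Fintype H] [Fintype K]
    [Fintype R]
    (eval : H → (Fin n → ZMod 2) → K)
    (f : (Fin n → ZMod 2) → (Fin n → ZMod 2))
    (A : H → K → R → (Fin n → ZMod 2))
    (W : H → K → Finset (Fin n → ZMod 2))
    -- the hash outputs have length k = t - Δ₁
    (hK : (Fintype.card K : ℝ) = (2 : ℝ) ^ (t - Δ₁))
    -- (1) A lands in W with probability at least δ on a uniform hash target
    (h1 : (∑ h : H, ∑ η : K, ∑ r : R, if A h η r ∈ W h η then (1 : ℝ) else 0)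
        / ((Fintype.card H : ℝ) * (Fintype.card K : ℝ) * (Fintype.card R : ℝ)) ≥ δ)
    -- (2) every x ∈ W_{h,η} with η = h(f(x)) is heavy: Pr[f(U_n) = f(x)] ≥ 2^{-t-Δ₃}
    (h2 : ∀ h η x, x ∈ W h η → eval h (f x) = η →
      ((Finset.univ.filter (fun x' => f x' = f x)).card : ℝ) / 2 ^ n
        ≥ (2 : ℝ) ^ (-t - Δ₃))
    -- (3) membership in W_{h,η} forces the hash of f(x) to equal η
    (h3 : ∀ h η x, x ∈ W h η → eval h (f x) = η) :
    -- B(y) = A(h, h(y), r) for uniform h, r inverts f with probability ≥ 2^{-(Δ₁+Δ₃)}·δ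
    (∑ x : Fin n → ZMod 2, ∑ h : H, ∑ r : R,
        if f (A h (eval h (f x)) r) = f x then (1 : ℝ) else 0)
      / ((2 : ℝ) ^ n * (Fintype.card H : ℝ) * (Fintype.card R : ℝ))
      ≥ (2 : ℝ) ^ (-(Δ₁ + Δ₃)) * δ := by
  set c : ℝ := 2 ^ n * 2 ^ (-t - Δ₃)
  have hcount : ∀ h r, c * #{η | A h η r ∈ W h η} ≤ #{x | f (A h (eval h (f x)) r) = f x} :=
    fun h r => mul_card_hits_le_card_inversions f (eval h) (A h · r) _ c (fun η => h3 h η _)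
      fun η hη => by
        have := h2 h η _ hη (h3 h η _ hη)
        rw [ge_iff_le, le_div_iff₀ (by positivity)] at this
        linarith
  have hsum : c * (∑ h : H, ∑ η : K, ∑ r : R, if A h η r ∈ W h η then (1 : ℝ) else 0) ≤
      ∑ x : Fin n → ZMod 2, ∑ h : H, ∑ r : R,
        if f (A h (eval h (f x)) r) = f x then (1 : ℝ) else 0 := by
    simp_rw [sum_comm (γ := K), sum_comm (γ := Fin n → ZMod 2), sum_boole, mul_sum]
    exact sum_le_sum fun h _ => sum_le_sum fun r _ => hcount h r
  have hpow : (2 : ℝ) ^ (-(Δ₁ + Δ₃)) = 2 ^ (-t - Δ₃) * 2 ^ (t - Δ₁) := by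
    rw [← Real.rpow_add two_pos]; ring_nf
  calc (2 : ℝ) ^ (-(Δ₁ + Δ₃)) * δ
      ≤ 2 ^ (-(Δ₁ + Δ₃)) * ((∑ h : H, ∑ η : K, ∑ r : R, if A h η r ∈ W h η then (1 : ℝ) else 0)
        / ((Fintype.card H : ℝ) * (Fintype.card K : ℝ) * (Fintype.card R : ℝ))) := by gcongr
    _ = c * (∑ h : H, ∑ η : K, ∑ r : R, if A h η r ∈ W h η then (1 : ℝ) else 0)
        / ((2 : ℝ) ^ n * (Fintype.card H : ℝ) * (Fintype.card R : ℝ)) := by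
      rw [hpow, hK]; field_simp; simp only [c]; ring
    _ ≤ _ := by gcongr

theorem stmt_16 (n : ℕ) (t Δ₁ Δ₃ δ : ℝ)
    {H K R : Type*} [Fintype H] [Nonempty H] [Fintype K] [Nonempty K]
    [Fintype R] [Nonempty R] [DecidableEq K]
    (eval : H → (Fin n → ZMod 2) → K)
    (f : (Fin n → ZMod 2) → (Fin n → ZMod 2))
    (A : H → K → R → (Fin n → ZMod 2))
    (W : H → K → Finset (Fin n → ZMod 2))
    -- the hash outputs have length k = t - Δ₁
    (hK : (Fintype.card K : ℝ) = (2 : ℝ) ^ (t - Δ₁))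
    -- (1) A lands in W with probability at least δ on a uniform hash target
    (h1 : (∑ h : H, ∑ η : K, ∑ r : R, if A h η r ∈ W h η then (1 : ℝ) else 0)
        / ((Fintype.card H : ℝ) * (Fintype.card K : ℝ) * (Fintype.card R : ℝ)) ≥ δ)
    -- (2) every x ∈ W_{h,η} with η = h(f(x)) is heavy: Pr[f(U_n) = f(x)] ≥ 2^{-t-Δ₃}
    (h2 : ∀ h η x, x ∈ W h η → eval h (f x) = η →
      ((Finset.univ.filter (fun x' => f x' = f x)).card : ℝ) / 2 ^ n
        ≥ (2 : ℝ) ^ (-t - Δ₃))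
    -- (3) membership in W_{h,η} forces the hash of f(x) to equal η
    (h3 : ∀ h η x, x ∈ W h η → eval h (f x) = η) :
    -- B(y) = A(h, h(y), r) for uniform h, r inverts f with probability ≥ 2^{-(Δ₁+Δ₃)}·δ
    (∑ x : Fin n → ZMod 2, ∑ h : H, ∑ r : R,
        if f (A h (eval h (f x)) r) = f x then (1 : ℝ) else 0)
      / ((2 : ℝ) ^ n * (Fintype.card H : ℝ) * (Fintype.card R : ℝ))
      ≥ (2 : ℝ) ^ (-(Δ₁ + Δ₃)) * δ :=
  stmt_16_general n t Δ₁ Δ₃ δ eval f A W hK h1 h2 h3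
end
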